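/- Let A be a dendriform algebra, M a representation, and f ∈ C^2_dend(A, M) a 2-cocycle (δ_dend f = 0). Then E = A ⊕ M with π_E([r]; (a,m), (b,n)) = (π_A([r]; a, b), θ_1([r]; a, n) + θ_2([r]; m, b) + f([r]; a, b)) is a dendriform algebra, and 0 → M → E → A → 0 is an abelian extension of dendriform algebras. -/

import Mathlib

section

variable {K A M : Type*} [Field K] [AddCommGroup A] [Module K A]
  [AddCommGroup M] [Module K M]

/-- The `≺` product on `E = A ⊕ M` twisted by the 2-cochain component
`f0 = f([1]; -, -)`:  `(a,m) ≺ (b,n) = (a ≺ b, θ₁([1]; a, n) + θ₂([1]; m, b) + f([1]; a, b))`. -/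
def extPrec (p : A →ₗ[K] A →ₗ[K] A) (t10 : A →ₗ[K] M →ₗ[K] M)
    (t20 : M →ₗ[K] A →ₗ[K] M) (f0 : A →ₗ[K] A →ₗ[K] M)
    (x y : A × M) : A × M :=
  (p x.1 y.1, t10 x.1 y.2 + t20 x.2 y.1 + f0 x.1 y.1)

/-- The `≻` product on `E = A ⊕ M` twisted by `f1 = f([2]; -, -)`. -/
def extSucc (s : A →ₗ[K] A →ₗ[K] A) (t11 : A →ₗ[K] M →ₗ[K] M)
    (t21 : M →ₗ[K] A →ₗ[K] M) (f1 : A →ₗ[K] A →ₗ[K] M)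
    (x y : A × M) : A × M :=
  (s x.1 y.1, t11 x.1 y.2 + t21 x.2 y.1 + f1 x.1 y.1)

end

/-! Each dendriform axiom of `E = A ⊕ M` holds on the `A`-component because it holds in `A`.
On the `M`-component, expanding by linearity, the terms containing one of the three
`M`-inputs are the representation axioms, and the terms containing none of them are
exactly the corresponding component of `δ_dend f = 0`; terms with two `M`-inputs
never occur, since `M` is square-zero in `E`. -/

section

variable {K A M : Type*} [Field K] [AddCommGroup A] [Module K A]
  [AddCommGroup M] [Module K M]
  (p s : A →ₗ[K] A →ₗ[K] A)
  (t10 t11 : A →ₗ[K] M →ₗ[K] M) (t20 t21 : M →ₗ[K] A →ₗ[K] M)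
  (f0 f1 : A →ₗ[K] A →ₗ[K] M)

theorem extPrec_extPrec
    (hd1 : ∀ a b c : A, p (p a b) c = p a (p b c + s b c))
    (hr1 : ∀ (a b : A) (m : M), t10 (p a b) m = t10 a (t10 b m + t11 b m))
    (hr4 : ∀ (a : A) (m : M) (c : A), t20 (t10 a m) c = t10 a (t20 m c + t21 m c))
    (hr7 : ∀ (m : M) (b c : A), t20 (t20 m b) c = t20 m (p b c + s b c))
    (hc0 : ∀ a b c : A,
      t10 a (f0 b c + f1 b c) - f0 (p a b) c + f0 a (p b c + s b c)
        - t20 (f0 a b) c = 0)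
    (x y z : A × M) :
    extPrec p t10 t20 f0 (extPrec p t10 t20 f0 x y) z
      = extPrec p t10 t20 f0 x (extPrec p t10 t20 f0 y z + extSucc s t11 t21 f1 y z) := by
  obtain ⟨a, m⟩ := x
  obtain ⟨b, n⟩ := y
  obtain ⟨c, q⟩ := z
  refine Prod.ext (hd1 a b c) ?_
  linear_combination (norm := skip) hr1 a b q + hr4 a n c + hr7 m b c - hc0 a b c
  simp only [extPrec, extSucc, Prod.mk_add_mk, map_add, LinearMap.add_apply]
  abel

theorem extPrec_extSucc
    (hd2 : ∀ a b c : A, p (s a b) c = s a (p b c))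
    (hr2 : ∀ (a b : A) (m : M), t10 (s a b) m = t11 a (t10 b m))
    (hr5 : ∀ (a : A) (m : M) (c : A), t20 (t11 a m) c = t11 a (t20 m c))
    (hr8 : ∀ (m : M) (b c : A), t20 (t21 m b) c = t21 m (p b c))
    (hc1 : ∀ a b c : A,
      t11 a (f0 b c) - f0 (s a b) c + f1 a (p b c) - t20 (f1 a b) c = 0)
    (x y z : A × M) :
    extPrec p t10 t20 f0 (extSucc s t11 t21 f1 x y) z
      = extSucc s t11 t21 f1 x (extPrec p t10 t20 f0 y z) := by
  obtain ⟨a, m⟩ := x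
  obtain ⟨b, n⟩ := y
  obtain ⟨c, q⟩ := z
  refine Prod.ext (hd2 a b c) ?_
  linear_combination (norm := skip) hr2 a b q + hr5 a n c + hr8 m b c - hc1 a b c
  simp only [extPrec, extSucc, map_add, LinearMap.add_apply]
  abel

theorem extSucc_extSucc
    (hd3 : ∀ a b c : A, s (p a b + s a b) c = s a (s b c))
    (hr3 : ∀ (a b : A) (m : M), t11 (p a b + s a b) m = t11 a (t11 b m))
    (hr6 : ∀ (a : A) (m : M) (c : A), t21 (t10 a m + t11 a m) c = t11 a (t21 m c))
    (hr9 : ∀ (m : M) (b c : A), t21 (t20 m b + t21 m b) c = t21 m (s b c))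
    (hc2 : ∀ a b c : A,
      t11 a (f1 b c) - f1 (p a b + s a b) c + f1 a (s b c)
        - t21 (f0 a b + f1 a b) c = 0)
    (x y z : A × M) :
    extSucc s t11 t21 f1 (extPrec p t10 t20 f0 x y + extSucc s t11 t21 f1 x y) z
      = extSucc s t11 t21 f1 x (extSucc s t11 t21 f1 y z) := by
  obtain ⟨a, m⟩ := x
  obtain ⟨b, n⟩ := y
  obtain ⟨c, q⟩ := z
  refine Prod.ext (hd3 a b c) ?_
  linear_combination (norm := skip) hr3 a b q + hr6 a n c + hr9 m b c - hc2 a b c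
  simp only [extPrec, extSucc, Prod.mk_add_mk, map_add, LinearMap.add_apply]
  abel

@[simp]
theorem extPrec_inr_inr (m n : M) :
    extPrec p t10 t20 f0 ((0 : A), m) ((0 : A), n) = 0 := by
  simp [extPrec, Prod.ext_iff]

@[simp]
theorem extSucc_inr_inr (m n : M) :
    extSucc s t11 t21 f1 ((0 : A), m) ((0 : A), n) = 0 := by
  simp [extSucc, Prod.ext_iff]

end

/-- for a dendriform algebra `A` (products `p, s`), a
representation `M` (actions `t10, t11, t20, t21`), and a 2-cocycle
`f = (f0, f1) ∈ C²_dend(A, M)` (hypotheses `hc0, hc1, hc2` express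
`δ_dend f = 0` at the three labels of `C₃`), the twisted operations make
`E = A ⊕ M` a dendriform algebra, and `0 → M → E → A → 0` is an abelian
extension: the inclusion `m ↦ (0, m)` is a morphism from `M` with the trivial
dendriform structure, and the projection `E → A` is a dendriform morphism. -/
theorem cocycle_gives_abelian_extension
    {K A M : Type*} [Field K] [AddCommGroup A] [Module K A]
    [AddCommGroup M] [Module K M]
    (p s : A →ₗ[K] A →ₗ[K] A)
    (t10 t11 : A →ₗ[K] M →ₗ[K] M) (t20 t21 : M →ₗ[K] A →ₗ[K] M)
    (f0 f1 : A →ₗ[K] A →ₗ[K] M)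
    (hd1 : ∀ a b c : A, p (p a b) c = p a (p b c + s b c))
    (hd2 : ∀ a b c : A, p (s a b) c = s a (p b c))
    (hd3 : ∀ a b c : A, s (p a b + s a b) c = s a (s b c))
    (hr1 : ∀ (a b : A) (m : M), t10 (p a b) m = t10 a (t10 b m + t11 b m))
    (hr2 : ∀ (a b : A) (m : M), t10 (s a b) m = t11 a (t10 b m))
    (hr3 : ∀ (a b : A) (m : M), t11 (p a b + s a b) m = t11 a (t11 b m))
    (hr4 : ∀ (a : A) (m : M) (c : A), t20 (t10 a m) c = t10 a (t20 m c + t21 m c))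
    (hr5 : ∀ (a : A) (m : M) (c : A), t20 (t11 a m) c = t11 a (t20 m c))
    (hr6 : ∀ (a : A) (m : M) (c : A), t21 (t10 a m + t11 a m) c = t11 a (t21 m c))
    (hr7 : ∀ (m : M) (b c : A), t20 (t20 m b) c = t20 m (p b c + s b c))
    (hr8 : ∀ (m : M) (b c : A), t20 (t21 m b) c = t21 m (p b c))
    (hr9 : ∀ (m : M) (b c : A), t21 (t20 m b + t21 m b) c = t21 m (s b c))
    -- the 2-cocycle condition δ_dend f = 0, at the labels [1], [2], [3] of C₃:
    (hc0 : ∀ a b c : A,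
      t10 a (f0 b c + f1 b c) - f0 (p a b) c + f0 a (p b c + s b c)
        - t20 (f0 a b) c = 0)
    (hc1 : ∀ a b c : A,
      t11 a (f0 b c) - f0 (s a b) c + f1 a (p b c) - t20 (f1 a b) c = 0)
    (hc2 : ∀ a b c : A,
      t11 a (f1 b c) - f1 (p a b + s a b) c + f1 a (s b c)
        - t21 (f0 a b + f1 a b) c = 0) :
    -- E = A ⊕ M is a dendriform algebra:
    (∀ x y z : A × M,
      extPrec p t10 t20 f0 (extPrec p t10 t20 f0 x y) z
        = extPrec p t10 t20 f0 x
            (extPrec p t10 t20 f0 y z + extSucc s t11 t21 f1 y z)) ∧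
    (∀ x y z : A × M,
      extPrec p t10 t20 f0 (extSucc s t11 t21 f1 x y) z
        = extSucc s t11 t21 f1 x (extPrec p t10 t20 f0 y z)) ∧
    (∀ x y z : A × M,
      extSucc s t11 t21 f1 (extPrec p t10 t20 f0 x y + extSucc s t11 t21 f1 x y) z
        = extSucc s t11 t21 f1 x (extSucc s t11 t21 f1 y z)) ∧
    -- the inclusion M → E is a morphism from the trivial dendriform structure:
    (∀ m n : M,
      extPrec p t10 t20 f0 ((0 : A), m) ((0 : A), n) = 0 ∧
      extSucc s t11 t21 f1 ((0 : A), m) ((0 : A), n) = 0) ∧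
    -- the projection E → A is a dendriform morphism:
    (∀ x y : A × M,
      (extPrec p t10 t20 f0 x y).1 = p x.1 y.1 ∧
      (extSucc s t11 t21 f1 x y).1 = s x.1 y.1) :=
  ⟨extPrec_extPrec p s t10 t11 t20 t21 f0 f1 hd1 hr1 hr4 hr7 hc0,
    extPrec_extSucc p s t10 t11 t20 t21 f0 f1 hd2 hr2 hr5 hr8 hc1,
    extSucc_extSucc p s t10 t11 t20 t21 f0 f1 hd3 hr3 hr6 hr9 hc2,
    fun m n => ⟨extPrec_inr_inr p t10 t20 f0 m n, extSucc_inr_inr s t11 t21 f1 m n⟩,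
    fun _ _ => ⟨rfl, rfl⟩⟩
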